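/- arXiv:2402.09017 — 5 statements merged into one kernel-verified Lean document; each statement's English description precedes it below -/
import Mathlib

section
/- Let p be a prime, q = p^e a power of p, N ≥ 1 an integer, and let k be an algebraic closure of 𝔽_p. Let L be a free ℤ-module of finite rank, let φ : L → L be a ℤ-module automorphism with φ^N = id, and let Q ⊆ L be a ℤ-submodule such that the quotient L/Q is finite of cardinality not divisible by p. Set V = L ⊗_ℤ k and let F : V → V be the unique additive map satisfying F(λ ⊗ x) = φ(λ) ⊗ x^q for all λ ∈ L, x ∈ k. Define Nm_N : V → V by Nm_N(v) = v + F(v) + ⋯ + F^{N−1}(v). Then {v ∈ V : F(v) = v} = Nm_N(W), where W is the additive subgroup of V generated by all elements μ ⊗ x with μ ∈ Q and x ∈ k satisfying x^{q^N} = x. -/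
/-!
On pure tensors `F^[N] (l ⊗ x) = l ⊗ x ^ q ^ N`, so `F^[N] - 1 = L ⊗ (x ↦ x ^ q ^ N - x)`. This map
is surjective because `k` is algebraically closed, and since `L` is flat its kernel is
`L ⊗ 𝔽_{q^N}`, which equals `W` because the index of `Q` is invertible in `𝔽_{q^N}`.
Surjectivity of `F^[N] - 1` alone gives the additive Lang theorem: if `F v = v`, pick `z` with
`F^[N] z - z = v`; then `w = F z - z` is fixed by `F^[N]` and `∑ i < N, F^[i] w` telescopes to `v`.
-/

open TensorProduct

section IterateNorm

variable {V : Type*} [AddCommGroup V] (F : V →+ V)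

theorem sum_range_iterate_map_sub_self (N : ℕ) (z : V) :
    ∑ i ∈ Finset.range N, F^[i] (F z - z) = F^[N] z - z := by
  simp_rw [iterate_map_sub, ← Function.iterate_succ_apply]
  exact Finset.sum_range_sub (fun i => F^[i] z) N

theorem setOf_map_eq_self_eq_image_sum_iterate {N : ℕ}
    (hsurj : Function.Surjective fun z => F^[N] z - z) :
    {v | F v = v} = (fun w => ∑ i ∈ Finset.range N, F^[i] w) '' {w | F^[N] w = w} := by
  ext v
  constructor
  · intro hv
    obtain ⟨z, hz⟩ := hsurj v
    have hFN : F^[N] z = z + v := eq_add_of_sub_eq' hz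
    refine ⟨F z - z, ?_, (sum_range_iterate_map_sub_self F N z).trans hz⟩
    change F^[N] (F z - z) = F z - z
    rw [iterate_map_sub, ← Function.iterate_succ_apply, Function.iterate_succ_apply', hFN,
      map_add, hv, add_sub_add_right_eq_sub]
  · rintro ⟨w, hw, rfl⟩
    apply sub_eq_zero.mp
    calc F (∑ i ∈ Finset.range N, F^[i] w) - ∑ i ∈ Finset.range N, F^[i] w
        = ∑ i ∈ Finset.range N, F^[i] (F w - w) := by
          simp_rw [map_sum, ← Finset.sum_sub_distrib, iterate_map_sub,
            ← Function.iterate_succ_apply, Function.iterate_succ_apply']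
      _ = 0 := by rw [sum_range_iterate_map_sub_self, hw, sub_self]

end IterateNorm

open Polynomial in
theorem IsAlgClosed.exists_pow_sub_self_eq {k : Type*} [Field k] [IsAlgClosed k] {n : ℕ}
    (hn : 1 < n) (a : k) : ∃ y, y ^ n - y = a := by
  have hdeg : (X ^ n - X - C a : k[X]).degree ≠ 0 := by
    apply degree_ne_of_natDegree_ne
    rw [natDegree_sub_C, FiniteField.X_pow_card_sub_X_natDegree_eq k hn]
    exact Nat.ne_zero_of_lt hn
  obtain ⟨y, hy⟩ := IsAlgClosed.exists_root _ hdeg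
  exact ⟨y, by simpa [sub_eq_zero] using hy⟩

section Frobenius

variable (k : Type*) [CommRing k] (p r : ℕ) [ExpChar k p]

def iterateFrobeniusSubSelf : k →ₗ[ℤ] k :=
  (iterateFrobenius k p r).toAddMonoidHom.toIntLinearMap - LinearMap.id

@[simp]
theorem iterateFrobeniusSubSelf_apply (x : k) :
    iterateFrobeniusSubSelf k p r x = x ^ p ^ r - x :=
  rfl

end Frobenius

theorem iterateFrobeniusSubSelf_surjective {k : Type*} [Field k] [IsAlgClosed k] {p r : ℕ}
    [ExpChar k p] (hp : 1 < p) (hr : r ≠ 0) :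
    Function.Surjective (iterateFrobeniusSubSelf k p r) := by
  simpa [Function.Surjective] using IsAlgClosed.exists_pow_sub_self_eq (Nat.one_lt_pow hr hp)

section TensorProduct

variable {L k : Type*} [AddCommGroup L] [Module ℤ L]

theorem iterate_apply_tmul [CommRing k] (F : L ⊗[ℤ] k →+ L ⊗[ℤ] k) {φ : L → L} {q : ℕ}
    (hF : ∀ (l : L) (x : k), F (l ⊗ₜ[ℤ] x) = φ l ⊗ₜ[ℤ] (x ^ q)) (j : ℕ) (l : L) (x : k) :
    F^[j] (l ⊗ₜ[ℤ] x) = φ^[j] l ⊗ₜ[ℤ] (x ^ q ^ j) := by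
  induction j generalizing l x with
  | zero => simp
  | succ j ih =>
    rw [Function.iterate_succ_apply, hF, ih, Function.iterate_succ_apply, ← pow_mul, ← pow_succ']

theorem iterate_sub_self_eq_lTensor [CommRing k] {p e N : ℕ} [ExpChar k p]
    (F : L ⊗[ℤ] k →+ L ⊗[ℤ] k) {φ : L → L}
    (hF : ∀ (l : L) (x : k), F (l ⊗ₜ[ℤ] x) = φ l ⊗ₜ[ℤ] (x ^ p ^ e)) (hφ : φ^[N] = id)
    (v : L ⊗[ℤ] k) :
    F^[N] v - v = LinearMap.lTensor L (iterateFrobeniusSubSelf k p (e * N)) v := by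
  induction v using TensorProduct.induction_on with
  | zero => simp
  | tmul l x => simp [iterate_apply_tmul F hF, hφ, pow_mul, tmul_sub]
  | add a b ha hb => rw [iterate_map_add, map_add, ← ha, ← hb]; abel

theorem tmul_mem_closure_of_card_ne_zero [Field k] {p r : ℕ} [ExpChar k p]
    (Q : Submodule ℤ L) [Fintype (L ⧸ Q)] (hQ : (Fintype.card (L ⧸ Q) : k) ≠ 0)
    (l : L) {x : k} (hx : x ^ p ^ r = x) :
    l ⊗ₜ[ℤ] x ∈ AddSubgroup.closure
      {v : L ⊗[ℤ] k | ∃ μ ∈ Q, ∃ x : k, x ^ p ^ r = x ∧ v = μ ⊗ₜ[ℤ] x} := by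
  set m := Fintype.card (L ⧸ Q)
  have hmQ : m • l ∈ Q := by
    rw [← Submodule.Quotient.mk_eq_zero, Submodule.Quotient.mk_smul]
    exact card_nsmul_eq_zero
  have hm : (m : k) ^ p ^ r = m := by
    rw [← iterateFrobenius_def, map_natCast]
  apply AddSubgroup.subset_closure
  refine ⟨m • l, hmQ, (m : k)⁻¹ * x, by rw [mul_pow, inv_pow, hm, hx], ?_⟩
  rw [smul_tmul, nsmul_eq_mul, mul_inv_cancel_left₀ hQ]

theorem closure_tmul_eq_ker_lTensor [Field k] {p : ℕ} [ExpChar k p] [Module.Flat ℤ L]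
    (Q : Submodule ℤ L) [Fintype (L ⧸ Q)] (hQ : (Fintype.card (L ⧸ Q) : k) ≠ 0) (r : ℕ) :
    (AddSubgroup.closure
        {v : L ⊗[ℤ] k | ∃ μ ∈ Q, ∃ x : k, x ^ p ^ r = x ∧ v = μ ⊗ₜ[ℤ] x} : Set (L ⊗[ℤ] k)) =
      {v | LinearMap.lTensor L (iterateFrobeniusSubSelf k p r) v = 0} := by
  apply subset_antisymm
  · intro v hv
    induction hv using AddSubgroup.closure_induction with
    | mem v hv =>
      obtain ⟨μ, -, x, hx, rfl⟩ := hv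
      simp [hx]
    | zero => simp
    | add => simp_all
    | neg => simp_all
  · intro v hv
    obtain ⟨u, rfl⟩ :=
      (Module.Flat.lTensor_exact L (LinearMap.exact_subtype_ker_map _) v).mp hv
    clear hv
    induction u using TensorProduct.induction_on with
    | zero => simp
    | tmul l x =>
      exact tmul_mem_closure_of_card_ne_zero Q hQ l (sub_eq_zero.mp (LinearMap.mem_ker.mp x.2))
    | add a b ha hb => rw [map_add]; exact add_mem ha hb

end TensorProduct

theorem stmt_1_general (p e q N : ℕ) (hp : p.Prime) (he : 1 ≤ e) (hq : q = p ^ e) (hN : 1 ≤ N)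
    (k : Type*) [Field k] [IsAlgClosed k] [CharP k p]
    (L : Type*) [AddCommGroup L] [Module ℤ L] [Module.Free ℤ L]
    (φ : L ≃ₗ[ℤ] L) (hφ : φ ^ N = 1)
    (Q : Submodule ℤ L) [Fintype (L ⧸ Q)] (hcard : ¬ p ∣ Fintype.card (L ⧸ Q))
    (F : TensorProduct ℤ L k →+ TensorProduct ℤ L k)
    (hF : ∀ (l : L) (x : k), F (l ⊗ₜ[ℤ] x) = (φ l) ⊗ₜ[ℤ] (x ^ q)) :
    {v : TensorProduct ℤ L k | F v = v} =
      (fun v => ∑ i ∈ Finset.range N, (⇑F)^[i] v) ''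
        ((AddSubgroup.closure
          {v : TensorProduct ℤ L k | ∃ μ ∈ Q, ∃ x : k, x ^ (q ^ N) = x ∧ v = μ ⊗ₜ[ℤ] x} :
            AddSubgroup (TensorProduct ℤ L k)) : Set (TensorProduct ℤ L k)) := by
  subst hq
  have : ExpChar k p := ExpChar.prime hp
  have hφN : (⇑φ)^[N] = id := by rw [← LinearEquiv.coe_pow, hφ]; rfl
  have hT := iterate_sub_self_eq_lTensor F hF hφN
  have hfixed : {w | F^[N] w = w} =
      {w | LinearMap.lTensor L (iterateFrobeniusSubSelf k p (e * N)) w = 0} := by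
    ext w
    simp [← hT, sub_eq_zero]
  have hQ : (Fintype.card (L ⧸ Q) : k) ≠ 0 := by rwa [Ne, CharP.cast_eq_zero_iff k p]
  have hsurj : Function.Surjective fun z => F^[N] z - z := by
    simpa only [hT] using LinearMap.lTensor_surjective L
      (iterateFrobeniusSubSelf_surjective hp.one_lt (Nat.mul_pos he hN).ne')
  rw [← pow_mul, closure_tmul_eq_ker_lTensor Q hQ, ← hfixed]
  exact setOf_map_eq_self_eq_image_sum_iterate F hsurj

/-- Let `L` be a free `ℤ`-module of finite rank, `φ` a `ℤ`-module
automorphism of `L` with `φ^N = 1`, and `Q ⊆ L` a submodule with `L/Q` finite of cardinality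
prime to `p`. Let `V = L ⊗ℤ k` (`k` an algebraic closure of `𝔽_p`), and let `F` be the
additive map with `F (λ ⊗ x) = φ λ ⊗ x^q`. Then the `F`-fixed points of `V` are exactly the
image under `Nm_N = ∑_{i<N} F^i` of the additive subgroup generated by all `μ ⊗ x` with
`μ ∈ Q` and `x^(q^N) = x`. -/
theorem stmt_1 (p e q N : ℕ) (hp : p.Prime) (he : 1 ≤ e) (hq : q = p ^ e) (hN : 1 ≤ N)
    (k : Type*) [Field k] [IsAlgClosed k] [CharP k p]
    (L : Type*) [AddCommGroup L] [Module ℤ L] [Module.Free ℤ L] [Module.Finite ℤ L]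
    (φ : L ≃ₗ[ℤ] L) (hφ : φ ^ N = 1)
    (Q : Submodule ℤ L) [Fintype (L ⧸ Q)] (hcard : ¬ p ∣ Fintype.card (L ⧸ Q))
    (F : TensorProduct ℤ L k →+ TensorProduct ℤ L k)
    (hF : ∀ (l : L) (x : k), F (l ⊗ₜ[ℤ] x) = (φ l) ⊗ₜ[ℤ] (x ^ q)) :
    {v : TensorProduct ℤ L k | F v = v} =
      (fun v => ∑ i ∈ Finset.range N, (⇑F)^[i] v) ''
        ((AddSubgroup.closure
          {v : TensorProduct ℤ L k | ∃ μ ∈ Q, ∃ x : k, x ^ (q ^ N) = x ∧ v = μ ⊗ₜ[ℤ] x} :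
            AddSubgroup (TensorProduct ℤ L k)) : Set (TensorProduct ℤ L k)) :=
  stmt_1_general p e q N hp he hq hN k L φ hφ Q hcard F hF
end

section
/- Let p be a prime, q = p^e, and let k be an algebraic closure of 𝔽_p. Let V be a finite-dimensional k-vector space and let F : V → V be an additive bijection satisfying F(c·v) = c^q·F(v) for all c ∈ k and v ∈ V. Then for every integer N ≥ 1, {v ∈ V : F(v) = v} = {u + F(u) + ⋯ + F^{N−1}(u) : u ∈ V with F^N(u) = u}. -/
/-!
Given an `F`-fixed vector `v`, look for a norm of the form `u = c • v` with `c ∈ k`. Semilinearity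
gives `F^[i] (c • v) = c ^ q ^ i • v`, so it suffices to find `c` with `∑_{i<N} c ^ q ^ i = 1`:
such a `c` is a root of a polynomial of degree `q ^ (N - 1) ≥ 1`, and applying the Frobenius
`x ↦ x ^ q` to the equation and telescoping shows `c ^ q ^ N = c`, i.e. `F^[N] u = u`.
-/

open Finset Polynomial

lemma Polynomial.coeff_sum_X_pow_pow_of_lt {R : Type*} [Semiring R] {q N j : ℕ} (hq : 2 ≤ q)
    (hj : j < N) : (∑ i ∈ range N, (X : R[X]) ^ q ^ i).coeff (q ^ j) = 1 := by
  simp only [finsetSum_coeff, coeff_X_pow, (Nat.pow_right_injective hq).eq_iff,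
    sum_ite_eq, mem_range, hj, if_true]

lemma exists_sum_pow_pow_eq_one (k : Type*) [Field k] [IsAlgClosed k] {q N : ℕ} (hq : 2 ≤ q)
    (hN : N ≠ 0) : ∃ c : k, ∑ i ∈ range N, c ^ q ^ i = 1 := by
  set P : k[X] := ∑ i ∈ range N, X ^ q ^ i - 1
  have hcoeff : P.coeff (q ^ (N - 1)) = 1 := by
    rw [coeff_sub, coeff_sum_X_pow_pow_of_lt hq (by omega),
      coeff_one, if_neg (by positivity), sub_zero]
  have hdeg : P.degree ≠ 0 := fun h => by
    rw [eq_C_of_degree_eq_zero h, coeff_C_of_ne_zero (by positivity)] at hcoeff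
    exact zero_ne_one hcoeff
  obtain ⟨c, hc⟩ := IsAlgClosed.exists_root P hdeg
  refine ⟨c, ?_⟩
  simpa [P, sub_eq_zero, eval_finsetSum] using hc

lemma pow_pow_eq_self_of_sum_pow_pow_eq_one {R : Type*} [CommRing R] (p e : ℕ) [ExpChar R p]
    {N : ℕ} {c : R} (hc : ∑ i ∈ range N, c ^ (p ^ e) ^ i = 1) : c ^ (p ^ e) ^ N = c := by
  have hshift : ∑ i ∈ range N, c ^ (p ^ e) ^ (i + 1) = 1 := by
    simp_rw [pow_succ, pow_mul, ← sum_pow_char_pow, hc, one_pow]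
  have htelescope := sum_range_sub (fun i => c ^ (p ^ e) ^ i) N
  rw [sum_sub_distrib, hshift, hc, sub_self, pow_zero, pow_one] at htelescope
  exact sub_eq_zero.mp htelescope.symm

lemma iterate_smul_of_apply_eq_self {M V : Type*} [Monoid M] [MulAction M V] {F : V → V} {q : ℕ}
    (hsemi : ∀ (c : M) (v : V), F (c • v) = c ^ q • F v) {v : V} (hv : F v = v) (c : M)
    (i : ℕ) : F^[i] (c • v) = c ^ q ^ i • v := by
  induction i with
  | zero => simp
  | succ i ih => rw [Function.iterate_succ_apply', ih, hsemi, hv, ← pow_mul, ← pow_succ]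

lemma AddMonoidHom.apply_sum_range_iterate_of_iterate_eq_self {V : Type*} [AddCommGroup V]
    (f : V →+ V) {N : ℕ} {u : V} (hu : f^[N] u = u) :
    f (∑ i ∈ Finset.range N, f^[i] u) = ∑ i ∈ Finset.range N, f^[i] u := by
  have hshift : f (∑ i ∈ Finset.range N, f^[i] u) = ∑ i ∈ Finset.range N, f^[i + 1] u := by
    simp only [map_sum, Function.iterate_succ_apply']
  have hrotate := sum_range_succ' (fun i => f^[i] u) N
  rw [sum_range_succ, hu, Function.iterate_zero_apply] at hrotate
  rw [hshift, add_right_cancel hrotate]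

theorem stmt_2_general (p e q : ℕ) (hp : p.Prime) (he : 1 ≤ e) (hq : q = p ^ e)
    (k : Type*) [Field k] [IsAlgClosed k] [CharP k p]
    (V : Type*) [AddCommGroup V] [Module k V]
    (F : V → V) (hadd : ∀ u v : V, F (u + v) = F u + F v)
    (hsemi : ∀ (c : k) (v : V), F (c • v) = c ^ q • F v)
    (N : ℕ) (hN : 1 ≤ N) :
    {v : V | F v = v} =
      {w : V | ∃ u : V, F^[N] u = u ∧ w = ∑ i ∈ Finset.range N, F^[i] u} := by
  ext v
  constructor
  · intro hv
    have hq2 : 2 ≤ q := hq ▸ hp.two_le.trans (Nat.le_self_pow (by omega) p)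
    obtain ⟨c, hc⟩ := exists_sum_pow_pow_eq_one k hq2 (by omega : N ≠ 0)
    have : ExpChar k p := ExpChar.prime hp
    have hcN : c ^ q ^ N = c := hq ▸ pow_pow_eq_self_of_sum_pow_pow_eq_one p e (hq ▸ hc)
    refine ⟨c • v, ?_, ?_⟩
    · rw [iterate_smul_of_apply_eq_self hsemi hv, hcN]
    · simp_rw [iterate_smul_of_apply_eq_self hsemi hv, ← sum_smul, hc, one_smul]
  · rintro ⟨u, hu, rfl⟩
    exact (AddMonoidHom.mk' F hadd).apply_sum_range_iterate_of_iterate_eq_self hu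

/-- Let `V` be a finite-dimensional vector space over an algebraic closure
`k` of `𝔽_p`, and `F : V → V` an additive bijection that is `q`-semilinear:
`F (c • v) = c^q • F v`. Then for every `N ≥ 1`, the `F`-fixed vectors are exactly the norms
`u + F u + ⋯ + F^{N-1} u` of `F^N`-fixed vectors `u`. -/
theorem stmt_2 (p e q : ℕ) (hp : p.Prime) (he : 1 ≤ e) (hq : q = p ^ e)
    (k : Type*) [Field k] [IsAlgClosed k] [CharP k p]
    (V : Type*) [AddCommGroup V] [Module k V] [FiniteDimensional k V]
    (F : V → V) (hadd : ∀ u v : V, F (u + v) = F u + F v)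
    (hbij : Function.Bijective F)
    (hsemi : ∀ (c : k) (v : V), F (c • v) = c ^ q • F v)
    (N : ℕ) (hN : 1 ≤ N) :
    {v : V | F v = v} =
      {w : V | ∃ u : V, F^[N] u = u ∧ w = ∑ i ∈ Finset.range N, F^[i] u} :=
  stmt_2_general p e q hp he hq k V F hadd hsemi N hN
end

section
/- Let p be a prime, q = p^e, and let k be an algebraic closure of 𝔽_p. Let v₁₀, v₁₁, v₃₀, v₃₁ ∈ k and consider the 2×2 matrix over the polynomial ring k[ϖ]: M = [[1 + v₁₀ϖ + v₁₁ϖ², v₃₀^q ϖ + v₃₁^q ϖ²], [v₃₀ϖ + v₃₁ϖ², 1 + v₁₀^q ϖ + v₁₁^q ϖ²]]. Let d₁ and d₂ denote the coefficients of ϖ and ϖ² in det M. Then d₁ = v₁₀ + v₁₀^q and d₂ = v₁₁ + v₁₁^q + v₁₀^{q+1} − v₃₀^{q+1}, and the two conditions d₁^q = d₁ and d₂^q = d₂ hold simultaneously if and only if v₁₀^{q²} = v₁₀ and v₁₁^{q²} − v₁₁ = v₃₀^{q²+q} − v₃₀^{q+1}. -/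
open Polynomial

/-- For the `2×2` matrix `M` over `k[ϖ]` given by
`[[1 + v₁₀ϖ + v₁₁ϖ², v₃₀^q ϖ + v₃₁^q ϖ²], [v₃₀ϖ + v₃₁ϖ², 1 + v₁₀^q ϖ + v₁₁^q ϖ²]]`,
the coefficients `d₁, d₂` of `ϖ, ϖ²` in `det M` are `v₁₀ + v₁₀^q` and
`v₁₁ + v₁₁^q + v₁₀^{q+1} - v₃₀^{q+1}` respectively, and `d₁^q = d₁ ∧ d₂^q = d₂` holds iff
`v₁₀^{q²} = v₁₀` and `v₁₁^{q²} - v₁₁ = v₃₀^{q²+q} - v₃₀^{q+1}`. -/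
theorem stmt_3 (p e q : ℕ) (hp : p.Prime) (he : 1 ≤ e) (hq : q = p ^ e)
    (k : Type*) [Field k] [IsAlgClosed k] [CharP k p]
    (v₁₀ v₁₁ v₃₀ v₃₁ : k)
    (M : Matrix (Fin 2) (Fin 2) (Polynomial k))
    (hM : M = !![1 + C v₁₀ * X + C v₁₁ * X ^ 2, C (v₃₀ ^ q) * X + C (v₃₁ ^ q) * X ^ 2;
                 C v₃₀ * X + C v₃₁ * X ^ 2, 1 + C (v₁₀ ^ q) * X + C (v₁₁ ^ q) * X ^ 2])
    (d₁ d₂ : k) (hd₁ : d₁ = (M.det).coeff 1) (hd₂ : d₂ = (M.det).coeff 2) :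
    d₁ = v₁₀ + v₁₀ ^ q ∧
    d₂ = v₁₁ + v₁₁ ^ q + v₁₀ ^ (q + 1) - v₃₀ ^ (q + 1) ∧
    ((d₁ ^ q = d₁ ∧ d₂ ^ q = d₂) ↔
      (v₁₀ ^ (q ^ 2) = v₁₀ ∧ v₁₁ ^ (q ^ 2) - v₁₁ = v₃₀ ^ (q ^ 2 + q) - v₃₀ ^ (q + 1))) := by
  haveI : Fact p.Prime := ⟨hp⟩
  have hdet : M.det
      = 1 + C (v₁₀ + v₁₀ ^ q) * X + C (v₁₁ + v₁₁ ^ q + v₁₀ ^ (q + 1) - v₃₀ ^ (q + 1)) * X ^ 2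
        + C (v₁₀ * v₁₁ ^ q + v₁₀ ^ q * v₁₁ - v₃₀ ^ q * v₃₁ - v₃₁ ^ q * v₃₀) * X ^ 3
        + C (v₁₁ * v₁₁ ^ q - v₃₁ * v₃₁ ^ q) * X ^ 4 := by
    rw [hM]
    simp only [Matrix.det_fin_two_of, map_add, map_sub, map_mul, map_pow, map_one]
    ring
  have e1 : d₁ = v₁₀ + v₁₀ ^ q := by
    rw [hd₁, hdet]
    simp only [coeff_add, coeff_C_mul, coeff_X_pow, coeff_one, coeff_X]
    norm_num
  have e2 : d₂ = v₁₁ + v₁₁ ^ q + v₁₀ ^ (q + 1) - v₃₀ ^ (q + 1) := by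
    rw [hd₂, hdet]
    simp only [coeff_add, coeff_C_mul, coeff_X_pow, coeff_one, coeff_X]
    norm_num
  -- Frobenius additivity
  have hadd : ∀ x y : k, (x + y) ^ q = x ^ q + y ^ q := by
    intro x y; rw [hq]; exact add_pow_char_pow x y p e
  have hsub : ∀ x y : k, (x - y) ^ q = x ^ q - y ^ q := by
    intro x y; rw [hq]; exact sub_pow_char_pow x y e
  have hd1q : d₁ ^ q = v₁₀ ^ q + v₁₀ ^ (q ^ 2) := by
    rw [e1, hadd]; ring
  have hd2q : d₂ ^ q = v₁₁ ^ q + v₁₁ ^ (q ^ 2) + v₁₀ ^ (q ^ 2 + q) - v₃₀ ^ (q ^ 2 + q) := by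
    rw [e2, hsub, hadd, hadd]; ring
  refine ⟨e1, e2, ?_⟩
  constructor
  · rintro ⟨h1, h2⟩
    rw [hd1q, e1] at h1
    rw [hd2q, e2] at h2
    have h1' : v₁₀ ^ (q ^ 2) = v₁₀ := by linear_combination h1
    exact ⟨h1', by linear_combination h2 - v₁₀ ^ q * h1'⟩
  · rintro ⟨h1, h2⟩
    constructor
    · rw [hd1q, e1]; linear_combination h1
    · rw [hd2q, e2]; linear_combination h2 + v₁₀ ^ q * h1
end

section
/- Let p be a prime, q = p^e, and let k be an algebraic closure of 𝔽_p. Let g ∈ k with g ≠ 0 and g^{q²} = g, and let b ∈ k. Define S = {v ∈ k : v − v^{q²} = g and v^q·g − v·g^q = b − g^{q+1}}. If b^q + b = g^{q+1}, then S is finite with exactly q elements; if b^q + b ≠ g^{q+1}, then S is empty. -/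
/-!
Write `c = b - g^{q+1}` for the right-hand side of the second equation. Raising that equation to
the `q`-th power and using `g^{q²} = g` gives `g^q (v^{q²} - v) = c^q + c = b^q + b - 2 g^{q+1}`,
so among solutions of the second equation the first one holds exactly when `b^q + b = g^{q+1}`.
In that case `S` is the set of roots of `g X^q - g^q X - c`, a polynomial of degree `q` whose
derivative is the nonzero constant `-g^q`; being separable, it has `q` distinct roots in `k`.
-/

open Polynomial

section AffineAdditive

variable {K : Type*} [Field K] {q : ℕ} (a β c : K)

theorem separable_C_mul_X_pow_sub_C_mul_X_sub_C (hq : (q : K) = 0) (hβ : β ≠ 0) :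
    (C a * X ^ q - C β * X - C c).Separable := by
  have hder : derivative (C a * X ^ q - C β * X - C c) = -C β := by
    simp [derivative_X_pow, hq]
  refine (separable_def' _).2 ⟨0, C (-β⁻¹), ?_⟩
  rw [hder, zero_mul, zero_add, mul_neg, ← C_mul, ← C_neg, neg_mul, neg_neg,
    inv_mul_cancel₀ hβ, C_1]

theorem natDegree_C_mul_X_pow_sub_C_mul_X_sub_C (hq : 1 < q) (ha : a ≠ 0) :
    (C a * X ^ q - C β * X - C c).natDegree = q := by
  compute_degree!
  · simpa [hq.ne', (zero_lt_one.trans hq).ne'] using ha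
  all_goals omega

theorem ncard_setOf_pow_mul_sub_mul_eq [IsAlgClosed K] (hq : (q : K) = 0) (hq1 : 1 < q)
    (ha : a ≠ 0) (hβ : β ≠ 0) : {v : K | v ^ q * a - v * β = c}.ncard = q := by
  classical
  set P := C a * X ^ q - C β * X - C c
  have hdeg : P.natDegree = q := natDegree_C_mul_X_pow_sub_C_mul_X_sub_C a β c hq1 ha
  have hP : P ≠ 0 := fun h => by simp [h] at hdeg; omega
  have hroots : {v : K | v ^ q * a - v * β = c} = ↑P.roots.toFinset := by
    ext v
    simp [P, mem_roots hP, sub_eq_zero, mul_comm _ a, mul_comm _ β]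
  rw [hroots, Set.ncard_coe_finset, Multiset.toFinset_card_of_nodup
    (nodup_roots (separable_C_mul_X_pow_sub_C_mul_X_sub_C a β c hq hβ)),
    IsAlgClosed.card_roots_eq_natDegree, hdeg]

end AffineAdditive

section Frobenius

variable {p e : ℕ}

theorem mul_pow_sq_sub_self_eq {R : Type*} [CommRing R] [ExpChar R p] {g v c : R}
    (hg : g ^ (p ^ e) ^ 2 = g) (h : v ^ p ^ e * g - v * g ^ p ^ e = c) :
    g ^ p ^ e * (v ^ (p ^ e) ^ 2 - v) = c ^ p ^ e + c := by
  have frob_twice (x : R) : (x ^ p ^ e) ^ p ^ e = x ^ (p ^ e) ^ 2 := by rw [← pow_mul, sq]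
  have hfrob : v ^ (p ^ e) ^ 2 * g ^ p ^ e - v ^ p ^ e * g = c ^ p ^ e := by
    rw [← h, sub_pow_expChar_pow, mul_pow, mul_pow, frob_twice, frob_twice, hg]
  linear_combination hfrob + h

theorem sub_pow_sq_eq_and_iff {K : Type*} [Field K] [ExpChar K p] {g b v : K} (hg0 : g ≠ 0)
    (hg : g ^ (p ^ e) ^ 2 = g) :
    (v - v ^ (p ^ e) ^ 2 = g ∧ v ^ p ^ e * g - v * g ^ p ^ e = b - g ^ (p ^ e + 1)) ↔
      (b ^ p ^ e + b = g ^ (p ^ e + 1) ∧ v ^ p ^ e * g - v * g ^ p ^ e = b - g ^ (p ^ e + 1)) := by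
  refine and_congr_left fun h => ?_
  have key := mul_pow_sq_sub_self_eq hg h
  have hc : (b - g ^ (p ^ e + 1)) ^ p ^ e = b ^ p ^ e - g ^ (p ^ e + 1) := by
    rw [sub_pow_expChar_pow, ← pow_mul, add_one_mul, ← sq, pow_add, hg, ← pow_succ']
  constructor
  · intro h1
    linear_combination -key - hc - g ^ p ^ e * h1
  · intro hb
    refine mul_left_cancel₀ (pow_ne_zero (p ^ e) hg0) ?_
    linear_combination -key - hc - hb

end Frobenius

/-- Over an algebraic closure `k` of `𝔽_p`, let `g ≠ 0` with `g^{q²} = g`,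
and `b ∈ k`. Let `S = {v : v − v^{q²} = g ∧ v^q·g − v·g^q = b − g^{q+1}}`. If
`b^q + b = g^{q+1}` then `S` is finite with exactly `q` elements; otherwise `S = ∅`. -/
theorem stmt_7 (p e q : ℕ) (hp : p.Prime) (he : 1 ≤ e) (hq : q = p ^ e)
    (k : Type*) [Field k] [IsAlgClosed k] [CharP k p]
    (g b : k) (hg0 : g ≠ 0) (hg : g ^ (q ^ 2) = g)
    (S : Set k)
    (hS : S = {v : k | v - v ^ (q ^ 2) = g ∧ v ^ q * g - v * g ^ q = b - g ^ (q + 1)}) :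
    (b ^ q + b = g ^ (q + 1) → S.Finite ∧ S.ncard = q) ∧
      (b ^ q + b ≠ g ^ (q + 1) → S = ∅) := by
  subst hq
  have : Fact p.Prime := ⟨hp⟩
  have hS' : S = {v | b ^ p ^ e + b = g ^ (p ^ e + 1) ∧
      v ^ p ^ e * g - v * g ^ p ^ e = b - g ^ (p ^ e + 1)} := by
    rw [hS]; ext v; exact sub_pow_sq_eq_and_iff hg0 hg
  refine ⟨fun hb => ?_, fun hb => by simp [hS', hb]⟩
  have hq0 : ((p ^ e : ℕ) : k) = 0 := (CharP.cast_eq_zero_iff k p _).2 (dvd_pow_self p (by omega))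
  have hq1 : 1 < p ^ e := Nat.one_lt_pow (by omega) hp.one_lt
  have hcard : S.ncard = p ^ e := by
    simp only [hS', hb, true_and]
    exact ncard_setOf_pow_mul_sub_mul_eq g (g ^ p ^ e) _ hq0 hq1 hg0 (pow_ne_zero _ hg0)
  exact ⟨Set.finite_of_ncard_ne_zero (by omega), hcard⟩
end

section
/- Let A be a commutative ring, let n ≥ 1 and r ≥ 1 be integers, and let I be an ideal of A with I^r = (0). Then the kernel of the natural group homomorphism GL_n(A) → GL_n(A/I) (i.e., the group of invertible n×n matrices g over A such that every entry of g − 1 lies in I) is a nilpotent group of nilpotency class at most r − 1. -/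
/-!
Write `Γ(J)` for the kernel of `GL_n(A) → GL_n(A/J)`. For `g ∈ Γ(I)` and `h ∈ Γ(J)`,
`⁅g, h⁆ - 1 = ((g - 1)(h - 1) - (h - 1)(g - 1)) g⁻¹ h⁻¹` has entries in `I * J`, so
`⁅Γ(I), Γ(J)⁆ ≤ Γ(I * J)`. By induction the `k`-th term of the lower central series of `Γ(I)` lies
in `Γ(I ^ (k + 1))`, which is trivial for `k = r - 1`.
-/

open scoped commutatorElement

theorem Units.val_commutatorElement_sub_one {R : Type*} [Ring R] (a b : Rˣ) :
    ((⁅a, b⁆ : Rˣ) : R) - 1 = ((a - 1) * (b - 1) - (b - 1) * (a - 1)) * ((a⁻¹ * b⁻¹ : Rˣ) : R) := by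
  have hba : (b * a * (a⁻¹ * b⁻¹ : Rˣ) : R) = 1 := by
    rw [← Units.val_mul, ← Units.val_mul, mul_assoc, _root_.mul_inv_cancel_left, mul_inv_cancel,
      Units.val_one]
  calc ((⁅a, b⁆ : Rˣ) : R) - 1 = a * b * (a⁻¹ * b⁻¹ : Rˣ) - b * a * (a⁻¹ * b⁻¹ : Rˣ) := by
        rw [hba, commutatorElement_def, ← Units.val_mul, ← Units.val_mul, mul_assoc (a * b), mul_assoc]
    _ = _ := by noncomm_ring

namespace Matrix

variable {n A : Type*} [Fintype n] [DecidableEq n] [CommRing A]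

theorem mul_mem_matrix_mul {I J : Ideal A} {M N : Matrix n n A} (hM : M ∈ I.matrix n)
    (hN : N ∈ J.matrix n) : M * N ∈ (I * J).matrix n := fun i j =>
  Ideal.sum_mem _ fun k _ => Ideal.mul_mem_mul (hM i k) (hN k j)

theorem mul_mem_matrix_of_mem_left {I : Ideal A} {M : Matrix n n A} (hM : M ∈ I.matrix n)
    (N : Matrix n n A) : M * N ∈ I.matrix n := by
  simpa only [Ideal.mul_top] using mul_mem_matrix_mul hM (by simp : N ∈ (⊤ : Ideal A).matrix n)

variable (n) in
def congruenceSubgroup (I : Ideal A) : Subgroup (Matrix n n A)ˣ :=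
  (Units.map (RingHom.mapMatrix (Ideal.Quotient.mk I) :
    Matrix n n A →+* Matrix n n (A ⧸ I)).toMonoidHom).ker

theorem mem_congruenceSubgroup {I : Ideal A} {g : (Matrix n n A)ˣ} :
    g ∈ congruenceSubgroup n I ↔ (g : Matrix n n A) - 1 ∈ I.matrix n := by
  simp only [congruenceSubgroup, MonoidHom.mem_ker, Units.ext_iff, Units.coe_map,
    RingHom.toMonoidHom_eq_coe, MonoidHom.coe_coe, RingHom.mapMatrix_apply, Units.val_one,
    Ideal.mem_matrix, ← Matrix.ext_iff, map_apply, sub_apply, ← Ideal.Quotient.eq]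
  refine forall₂_congr fun i j => ?_
  by_cases h : i = j <;> simp [one_apply, h]

theorem commutatorElement_mem_congruenceSubgroup {I J : Ideal A} {g h : (Matrix n n A)ˣ}
    (hg : g ∈ congruenceSubgroup n I) (hh : h ∈ congruenceSubgroup n J) :
    ⁅g, h⁆ ∈ congruenceSubgroup n (I * J) := by
  rw [mem_congruenceSubgroup] at hg hh ⊢
  have hJI : (h - 1 : Matrix n n A) * (g - 1) ∈ (I * J).matrix n := by
    rw [mul_comm I]
    exact mul_mem_matrix_mul hh hg
  rw [Units.val_commutatorElement_sub_one]
  exact mul_mem_matrix_of_mem_left (sub_mem (mul_mem_matrix_mul hg hh) hJI) _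

theorem commutator_congruenceSubgroup_le (I J : Ideal A) :
    ⁅congruenceSubgroup n I, congruenceSubgroup n J⁆ ≤ congruenceSubgroup n (I * J) :=
  Subgroup.commutator_le.mpr fun _ hg _ hh => commutatorElement_mem_congruenceSubgroup hg hh

theorem lowerCentralSeries_congruenceSubgroup_le (I : Ideal A) (k : ℕ) :
    (congruenceSubgroup n I).lowerCentralSeries k ≤ congruenceSubgroup n (I ^ (k + 1)) := by
  induction k with
  | zero => rw [Subgroup.lowerCentralSeries_zero, zero_add, pow_one]
  | succ k ih =>
    rw [Subgroup.lowerCentralSeries_succ, pow_succ]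
    exact (Subgroup.commutator_mono ih le_rfl).trans (commutator_congruenceSubgroup_le _ _)

theorem congruenceSubgroup_bot : congruenceSubgroup n (⊥ : Ideal A) = ⊥ := by
  refine (Subgroup.eq_bot_iff_forall _).mpr fun g hg => Units.ext ?_
  rwa [mem_congruenceSubgroup, Ideal.matrix_bot, Ideal.mem_bot, sub_eq_zero] at hg

end Matrix

theorem stmt_11_general (A : Type*) [CommRing A] (n r : ℕ) (hr : 1 ≤ r)
    (I : Ideal A) (hI : I ^ r = ⊥) :
    lowerCentralSeries
      (MonoidHom.ker
        (Units.map
          ((RingHom.mapMatrix (Ideal.Quotient.mk I) :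
              Matrix (Fin n) (Fin n) A →+* Matrix (Fin n) (Fin n) (A ⧸ I)).toMonoidHom)))
      (r - 1) = ⊥ := by
  have h := Matrix.lowerCentralSeries_congruenceSubgroup_le (n := Fin n) I (r - 1)
  rw [Nat.sub_add_cancel hr, hI, Matrix.congruenceSubgroup_bot] at h
  exact le_bot_iff.mp h

/-- Let `A` be a commutative ring, `n ≥ 1`, `r ≥ 1`, and `I` an ideal with
`I^r = 0`. Then the kernel of the natural map `GL_n(A) → GL_n(A/I)` is a nilpotent group of
nilpotency class at most `r − 1`, i.e. its `(r-1)`-st lower central series term is trivial. -/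
theorem stmt_11 (A : Type*) [CommRing A] (n r : ℕ) (hn : 1 ≤ n) (hr : 1 ≤ r)
    (I : Ideal A) (hI : I ^ r = ⊥) :
    lowerCentralSeries
      (MonoidHom.ker
        (Units.map
          ((RingHom.mapMatrix (Ideal.Quotient.mk I) :
              Matrix (Fin n) (Fin n) A →+* Matrix (Fin n) (Fin n) (A ⧸ I)).toMonoidHom)))
      (r - 1) = ⊥ :=
  stmt_11_general A n r hr I hI
end
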